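/- arXiv:1910.06515 — 3 statements merged into one kernel-verified Lean document; each statement's English description precedes it below -/
import Mathlib

section
/- Let D(z^j) = diag(z^j, z^{−j}) and X(z) = [I₂; D(z); ...; D(z^{ℓ_a−1})] ⊗ [I₂; D(z^{ℓ_a}); ...; D(z^{ℓ_a(ℓ_b−1)})] (a 4ℓ_aℓ_b × 4 matrix). If z_1,...,z_{ℓ_aℓ_b} are distinct nonzero complex numbers, then the 4ℓ_aℓ_b × 4ℓ_aℓ_b matrix [X(z_1) | X(z_2) | ... | X(z_{ℓ_aℓ_b})] is nonsingular. -/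
/-- X(z) = [I₂; D(z); ...; D(z^{ℓa−1})] ⊗ [I₂; D(z^{ℓa}); ...; D(z^{ℓa(ℓb−1)})],
a 4ℓaℓb × 4 matrix, where D(z^j) = diag(z^j, z^{−j}). -/
noncomputable def Xmat (la lb : ℕ) (z : ℂ) :
    Matrix ((Fin la × Fin 2) × (Fin lb × Fin 2)) (Fin 2 × Fin 2) ℂ :=
  Matrix.of fun p c =>
    (if p.1.2 = c.1 then (if p.1.2 = 0 then z ^ (p.1.1 : ℕ) else z⁻¹ ^ (p.1.1 : ℕ)) else 0) *
    (if p.2.2 = c.2 then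
      (if p.2.2 = 0 then z ^ ((p.2.1 : ℕ) * la) else z⁻¹ ^ ((p.2.1 : ℕ) * la)) else 0)

lemma vandermonde_det_ne_zero' {n : ℕ} {x : Fin n → ℂ} (hinj : Function.Injective x) :
    (Matrix.vandermonde x).det ≠ 0 := by
  rw [Matrix.det_vandermonde]
  refine Finset.prod_ne_zero_iff.mpr fun i _ => Finset.prod_ne_zero_iff.mpr fun j hj => ?_
  exact sub_ne_zero.mpr fun hEq => (Finset.mem_Ioi.mp hj).ne' (hinj hEq)

lemma key_block {la lb : ℕ} (hla : 0 < la) (hlb : 0 < lb) (x : Fin (la * lb) → ℂ)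
    (hx0 : ∀ k, x k ≠ 0) (hxinj : Function.Injective x) (neg : Bool)
    (u : Fin (la * lb) → ℂ)
    (h : ∀ (s : Fin la) (t : Fin lb),
      ∑ k, (x k ^ (s : ℕ) * (if neg then (x k)⁻¹ else x k) ^ ((t : ℕ) * la)) * u k = 0) :
    u = 0 := by
  set w : Fin (la * lb) → ℂ :=
    fun k => u k * (if neg then (x k)⁻¹ ^ ((lb - 1) * la) else 1) with hw
  have hwv : ∀ m : Fin (la * lb), ∑ k, w k * x k ^ (m : ℕ) = 0 := by
    intro m
    have hmlt : (m : ℕ) < la * lb := m.isLt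
    have hs : (m : ℕ) % la < la := Nat.mod_lt _ hla
    have ht : (m : ℕ) / la < lb := Nat.div_lt_of_lt_mul hmlt
    have hm : (m : ℕ) % la + (m : ℕ) / la * la = (m : ℕ) := Nat.mod_add_div' _ _
    cases neg with
    | false =>
      have H := h ⟨(m : ℕ) % la, hs⟩ ⟨(m : ℕ) / la, ht⟩
      rw [← H]
      refine Finset.sum_congr rfl fun k _ => ?_
      simp only [hw, if_neg (by simp : ¬ (false = true)), mul_one]
      rw [mul_comm (u k), ← pow_add]
      simp [hm]
    | true =>
      have H := h ⟨(m : ℕ) % la, hs⟩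
        ⟨lb - 1 - (m : ℕ) / la, (Nat.sub_le (lb - 1) _).trans_lt (Nat.sub_lt hlb one_pos)⟩
      rw [← H]
      refine Finset.sum_congr rfl fun k _ => ?_
      simp only [hw, if_pos rfl, if_true]
      have hxk := hx0 k
      have hexp : ((lb - 1 : ℕ)) * la = (lb - 1 - (m : ℕ) / la) * la + (m : ℕ) / la * la := by
        rw [← add_mul]
        congr 1
        omega
      have hm' : x k ^ (m : ℕ) = x k ^ ((m : ℕ) % la) * x k ^ ((m : ℕ) / la * la) := by
        rw [← pow_add, hm]
      rw [inv_pow, inv_pow, hexp, pow_add, hm']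
      field_simp
  have hw0 : w = 0 := by
    by_contra hne
    refine vandermonde_det_ne_zero' hxinj (Matrix.exists_vecMul_eq_zero_iff.mp ⟨w, hne, ?_⟩)
    funext m
    simpa [Matrix.vecMul, dotProduct, Matrix.vandermonde] using hwv m
  funext k
  have hk := congrFun hw0 k
  simp only [hw, Pi.zero_apply] at hk
  rcases mul_eq_zero.mp hk with h1 | h2
  · exact h1
  · exfalso
    cases neg <;> simp at h2
    exact hx0 k h2.1

/-- for distinct nonzero z₁,...,z_{ℓaℓb}, the square matrix
[X(z₁) | ... | X(z_{ℓaℓb})] is nonsingular (under any identification of the two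
index types, i.e. for every reindexing of the rows). -/
theorem stmt5 (la lb : ℕ) (hla : 0 < la) (hlb : 0 < lb)
    (z : Fin (la * lb) → ℂ) (hz0 : ∀ i, z i ≠ 0) (hzinj : Function.Injective z)
    (e : Fin (la * lb) × (Fin 2 × Fin 2) ≃ (Fin la × Fin 2) × (Fin lb × Fin 2)) :
    (Matrix.of fun (r c : Fin (la * lb) × (Fin 2 × Fin 2)) =>
      Xmat la lb (z c.1) (e r) c.2).det ≠ 0 := by
  intro hdet
  obtain ⟨v, hv0, hv⟩ := Matrix.exists_mulVec_eq_zero_iff.mpr hdet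
  have hrow : ∀ (s : Fin la) (ε : Fin 2) (t : Fin lb) (δ : Fin 2),
      ∑ k : Fin (la * lb),
        ((if ε = 0 then (z k) ^ (s : ℕ) else (z k)⁻¹ ^ (s : ℕ)) *
         (if δ = 0 then (z k) ^ ((t : ℕ) * la) else (z k)⁻¹ ^ ((t : ℕ) * la))) * v (k, (ε, δ)) = 0 := by
    intro s ε t δ
    have h0 := congrFun hv (e.symm ((s, ε), (t, δ)))
    simp only [Matrix.mulVec, dotProduct, Matrix.of_apply, Pi.zero_apply,
      Equiv.apply_symm_apply] at h0
    rw [← h0, Fintype.sum_prod_type]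
    refine Finset.sum_congr rfl fun k _ => ?_
    rw [Fintype.sum_eq_single (ε, δ)]
    · simp [Xmat]
    · intro ab hab
      simp only [Xmat, Matrix.of_apply]
      by_cases h1 : ε = ab.1 <;> by_cases h2 : δ = ab.2
      · exact absurd (Prod.ext h1.symm h2.symm) (by simpa using hab)
      · simp [h2]
      · simp [h1]
      · simp [h1]
  have hval : ∀ (k : Fin (la * lb)) (ε δ : Fin 2), v (k, (ε, δ)) = 0 := by
    intro k ε δ
    have hinvinj : Function.Injective (fun i => (z i)⁻¹) :=
      fun a b hab => hzinj (inv_injective hab)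
    have hinv0 : ∀ i, (z i)⁻¹ ≠ 0 := fun i => inv_ne_zero (hz0 i)
    fin_cases ε <;> fin_cases δ
    · have := key_block hla hlb z hz0 hzinj false (fun k => v (k, (0, 0)))
        (fun s t => by simpa using hrow s 0 t 0)
      exact congrFun this k
    · have := key_block hla hlb z hz0 hzinj true (fun k => v (k, (0, 1)))
        (fun s t => by simpa using hrow s 0 t 1)
      exact congrFun this k
    · have := key_block hla hlb (fun i => (z i)⁻¹) hinv0 hinvinj true (fun k => v (k, (1, 0)))
        (fun s t => by simpa [inv_inv] using hrow s 1 t 0)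
      exact congrFun this k
    · have := key_block hla hlb (fun i => (z i)⁻¹) hinv0 hinvinj false (fun k => v (k, (1, 1)))
        (fun s t => by simpa using hrow s 1 t 1)
      exact congrFun this k
  apply hv0
  funext c
  obtain ⟨k, ε, δ⟩ := c
  exact hval k ε δ
end

section
/- Let q be an odd integer, m < q, f = e^{iπ/m}, and t_{j'} = f·ω_m^{j'} for j' ∈ {0,...,m−1}. Then for every integer ℓ, the distance from t_{j'} to the q-th root of unity ω_q^ℓ is at least 2/q²; that is, min over all q-th roots of unity α of |t_{j'} − α| ≥ 2/q². -/
/-! The chord from `e^{ia}` to `e^{ib}` has length `2 |sin ((a - b) / 2)|`. Here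
`(a - b) / 2 = π k / (2 m q)` with `k = (2j' + 1) q - 2 ℓ m`, which is odd because `q` is, so
`π k / (2 m q)` stays at least `π / (2 m q)` away from `π ℤ` and the sine is at least
`1 / (m q) ≥ 1 / q²`. -/

open Real

theorem norm_exp_mul_I_sub_exp_mul_I (a b : ℝ) :
    ‖Complex.exp (a * Complex.I) - Complex.exp (b * Complex.I)‖ = 2 * |sin ((a - b) / 2)| := by
  have hfactor : Complex.exp (a * Complex.I) - Complex.exp (b * Complex.I) =
      Complex.exp (b * Complex.I) * (Complex.exp (Complex.I * ↑(a - b)) - 1) := by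
    rw [mul_sub, ← Complex.exp_add]
    push_cast
    ring_nf
  rw [hfactor, norm_mul, Complex.norm_exp_ofReal_mul_I, one_mul,
    Complex.norm_exp_I_mul_ofReal_sub_one, Real.norm_eq_abs, abs_mul, abs_two]

/-- Reducing `k` modulo `2N` to `r ∈ [-N, N)` changes the sine only by a sign, and `r ≠ 0`
since it is odd; Jordan's inequality then gives `|sin (π r / 2N)| ≥ |r| / N`. -/
theorem one_div_le_abs_sin_pi_mul_div_of_odd {k : ℤ} (hk : Odd k) {N : ℕ} (hN : 0 < N) :
    1 / (N : ℝ) ≤ |sin (π * k / (2 * N))| := by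
  have hNR : (0 : ℝ) < N := by exact_mod_cast hN
  set r := k.bmod (2 * N)
  set n := k.bdiv (2 * N)
  have hkrn : r + 2 * N * n = k := by exact_mod_cast k.bmod_add_bdiv (2 * N)
  have hr_ne : r ≠ 0 := by
    rintro hr
    rw [hr, zero_add] at hkrn
    exact Int.not_even_iff_odd.mpr hk (hkrn ▸ ⟨N * n, by ring⟩)
  have hr_le : |(r : ℝ)| ≤ N := by
    have := Int.le_bmod (x := k) (m := 2 * N) (by omega)
    have := Int.bmod_lt (x := k) (m := 2 * N) (by omega)
    exact_mod_cast abs_le.mpr ⟨by omega, by omega⟩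
  have hr_one : (1 : ℝ) ≤ |(r : ℝ)| := by exact_mod_cast Int.one_le_abs hr_ne
  have hshift : π * k / (2 * N) = π * r / (2 * N) + n * π := by
    rw [← hkrn]; push_cast; field_simp
  have habs : |π * r / (2 * N)| = π / 2 * (|(r : ℝ)| / N) := by
    rw [abs_div, abs_mul, abs_of_pos pi_pos, abs_of_pos (by linarith : (0 : ℝ) < 2 * N)]
    field_simp
  have hjordan := mul_abs_le_abs_sin (x := π * r / (2 * N))
    (by rw [habs]; exact mul_le_of_le_one_right (by positivity) ((div_le_one hNR).mpr hr_le))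
  rw [hshift, sin_add_int_mul_pi, abs_mul, abs_neg_one_zpow, one_mul]
  calc 1 / (N : ℝ) ≤ |(r : ℝ)| / N := by gcongr
    _ = 2 / π * |π * r / (2 * N)| := by rw [habs]; field_simp
    _ ≤ _ := hjordan

theorem stmt9_general (q m : ℕ) (hq : Odd q) (hm : 0 < m) (hmq : m < q)
    (j' : ℕ) (l : ℤ) :
    (2 : ℝ) / (q : ℝ) ^ 2 ≤
      ‖Complex.exp (Real.pi * Complex.I * (2 * (j' : ℂ) + 1) / m) -
        Complex.exp (2 * Real.pi * Complex.I / q) ^ l‖ := by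
  have hqR : (0 : ℝ) < q := by exact_mod_cast hm.trans hmq
  have hmR : (0 : ℝ) < m := by exact_mod_cast hm
  have hmqR : (m : ℝ) ≤ q := by exact_mod_cast hmq.le
  set k : ℤ := (2 * j' + 1) * q - 2 * l * m
  have hk : Odd k := by
    obtain ⟨c, hc⟩ := hq
    exact ⟨(2 * j' + 1) * c + j' - l * m, by simp only [k, hc]; push_cast; ring⟩
  have hangle : (π * (2 * j' + 1) / m - 2 * π * l / q) / 2 = π * k / (2 * (m * q : ℕ)) := by
    simp only [k]; push_cast; field_simp
  have hroot : Complex.exp (2 * π * Complex.I / q) ^ l =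
      Complex.exp (↑(2 * π * l / q) * Complex.I) := by
    rw [← Complex.exp_int_mul]; push_cast; ring_nf
  calc (2 : ℝ) / q ^ 2 ≤ 2 * (1 / (m * q : ℕ)) := by
        rw [mul_one_div]; push_cast
        exact div_le_div_of_nonneg_left zero_le_two (by positivity) (by nlinarith)
    _ ≤ 2 * |sin (π * k / (2 * (m * q : ℕ)))| := by
        gcongr; exact one_div_le_abs_sin_pi_mul_div_of_odd hk (Nat.mul_pos hm (hm.trans hmq))
    _ = _ := by
        rw [← hangle, ← norm_exp_mul_I_sub_exp_mul_I, hroot]; push_cast; ring_nf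

/-- with q odd, m < q, t_{j'} = e^{iπ(2j'+1)/m}, the distance from t_{j'}
to any q-th root of unity ω_q^ℓ is at least 2/q². -/
theorem stmt9 (q m : ℕ) (hq : Odd q) (hm : 0 < m) (hmq : m < q)
    (j' : ℕ) (hj' : j' < m) (l : ℤ) :
    (2 : ℝ) / (q : ℝ) ^ 2 ≤
      ‖Complex.exp (Real.pi * Complex.I * (2 * (j' : ℂ) + 1) / m) -
        Complex.exp (2 * Real.pi * Complex.I / q) ^ l‖ :=
  stmt9_general q m hq hm hmq j' l
end

section
/- Let θ = 2π/q with q odd, q ≥ n, and let i_0,...,i_{k-1} be distinct integers in {0,...,n-1}. Then the 2k×2k block matrix G̃ whose (a,b)-th 2×2 block is R_θ^{i_b·a} (powers of the rotation matrix) is nonsingular. -/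
/-!
Over `ℂ` the rotation `R_θ` is diagonalised by `P = !![1, 1; -i, i]`:
`R_θ P = P · diag(ζ, ζ⁻¹)` with `ζ = e^{iθ}`. Conjugating `G` by `1 ⊗ P` therefore makes it
block diagonal, with the two blocks `(ζ^{± i_b a})_{a,b}`. These are transposed Vandermonde
matrices in the nodes `ζ^{± i_b}`, which are distinct because `ζ` is a primitive `q`-th root
of unity and the `i_b` are distinct and smaller than `q`.
-/

open Matrix Kronecker

theorem det_eq_prod_det_of_blocks_mul_eq_mul_diagonal {ι σ R : Type*} [Fintype ι]
    [DecidableEq ι] [Fintype σ] [DecidableEq σ] [CommRing R]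
    (P : Matrix σ σ R) (hP : IsUnit P.det) (f : σ → ι → ι → R) (G : Matrix (ι × σ) (ι × σ) R)
    (hG : ∀ a b, (of fun r c => G (a, r) (b, c)) * P = P * diagonal fun c => f c a b) :
    G.det = ∏ c, (of (f c)).det := by
  have hconj : G * ((1 : Matrix ι ι R) ⊗ₖ P) =
      ((1 : Matrix ι ι R) ⊗ₖ P) * blockDiagonal fun c => of (f c) := by
    ext ⟨a, r⟩ ⟨b, c⟩
    have hab := congrFun₂ (hG a b) r c
    rw [mul_diagonal, mul_apply] at hab
    simp only [of_apply] at hab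
    simp [mul_apply, Fintype.sum_prod_type, one_apply, blockDiagonal_apply, hab]
  have hdet := congrArg det hconj
  rw [det_mul, det_mul, det_kronecker, det_blockDiagonal, det_one, one_pow, one_mul,
    mul_comm] at hdet
  exact (hP.pow _).mul_left_cancel hdet

theorem det_of_pow_mul_ne_zero_of_isPrimitiveRoot {R : Type*} [CommRing R] [IsDomain R]
    {ξ : R} {q k : ℕ} (hξ : IsPrimitiveRoot ξ q) {idx : Fin k → ℕ}
    (hinj : Function.Injective idx) (hlt : ∀ b, idx b < q) :
    (of fun a b : Fin k => ξ ^ (idx b * a)).det ≠ 0 := by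
  have hvdm : (of fun a b : Fin k => ξ ^ (idx b * a)) = (vandermonde fun b => ξ ^ idx b)ᵀ := by
    ext a b
    simp [vandermonde, pow_mul]
  rw [hvdm, det_transpose, det_vandermonde_ne_zero_iff]
  exact fun b b' h => hinj (hξ.pow_inj (hlt b) (hlt b') h)

section Rotation

open Complex

theorem rotation_mul_eq_mul_diagonal (z : ℂ) :
    !![cos z, -sin z; sin z, cos z] * !![1, 1; -I, I] =
      !![1, 1; -I, I] * diagonal ![exp (z * I), (exp (z * I))⁻¹] := by
  rw [← exp_neg, ← neg_mul, exp_mul_I, exp_mul_I, cos_neg, sin_neg]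
  ext r c
  fin_cases r <;> fin_cases c <;> simp [mul_apply, Fin.sum_univ_two] <;> ring_nf <;> simp

theorem map_ofReal_rotation_pow_mul_eq_mul_diagonal (θ : ℝ) (m : ℕ) :
    (!![Real.cos θ, -Real.sin θ; Real.sin θ, Real.cos θ] ^ m).map ((↑) : ℝ → ℂ) *
        !![1, 1; -I, I] =
      !![1, 1; -I, I] * diagonal (![exp (θ * I), (exp (θ * I))⁻¹] ^ m) := by
  have hmap : (!![Real.cos θ, -Real.sin θ; Real.sin θ, Real.cos θ]).map ((↑) : ℝ → ℂ) =
      !![cos θ, -sin θ; sin θ, cos θ] := by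
    ext r c
    fin_cases r <;> fin_cases c <;> simp [ofReal_cos, ofReal_sin]
  rw [show ∀ M : Matrix (Fin 2) (Fin 2) ℝ, (M ^ m).map ((↑) : ℝ → ℂ) = M.map (↑) ^ m from
    fun M => M.map_pow ofRealHom m, hmap, ← diagonal_pow]
  exact (SemiconjBy.pow_right (rotation_mul_eq_mul_diagonal θ).symm m).symm

end Rotation

theorem stmt12_general (q n k : ℕ) (hq0 : 0 < q) (hn : n ≤ q)
    (idx : Fin k → ℕ) (hinj : Function.Injective idx) (hlt : ∀ b, idx b < n)
    (G : Matrix (Fin k × Fin 2) (Fin k × Fin 2) ℝ)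
    (hG : ∀ (a b : Fin k) (r c : Fin 2), G (a, r) (b, c) =
      ((!![Real.cos (2 * Real.pi / q), -Real.sin (2 * Real.pi / q);
           Real.sin (2 * Real.pi / q),  Real.cos (2 * Real.pi / q)]) ^
        (idx b * (a : ℕ))) r c) :
    G.det ≠ 0 := by
  set θ : ℝ := 2 * Real.pi / q
  set ζ : ℂ := Complex.exp (θ * Complex.I)
  have hζ : IsPrimitiveRoot ζ q := by
    convert Complex.isPrimitiveRoot_exp q hq0.ne' using 2
    push_cast [θ]
    ring
  have hP : IsUnit (!![1, 1; -Complex.I, Complex.I]).det := by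
    simp [det_fin_two_of]
  have hdet : (G.map ((↑) : ℝ → ℂ)).det =
      ∏ c, (of fun a b : Fin k => ![ζ, ζ⁻¹] c ^ (idx b * a)).det := by
    refine det_eq_prod_det_of_blocks_mul_eq_mul_diagonal _ hP _ _ fun a b => ?_
    have hblock : (of fun r c => G.map ((↑) : ℝ → ℂ) (a, r) (b, c)) =
        (!![Real.cos θ, -Real.sin θ; Real.sin θ, Real.cos θ] ^ (idx b * a)).map (↑) := by
      ext r c
      simp [hG]
    rw [hblock]
    exact map_ofReal_rotation_pow_mul_eq_mul_diagonal θ _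
  have hcast : (G.det : ℂ) = (G.map (↑)).det := Complex.ofRealHom.map_det G
  have hlt_q : ∀ b, idx b < q := fun b => (hlt b).trans_le hn
  rw [← Complex.ofReal_ne_zero, hcast, hdet, Fin.prod_univ_two]
  exact mul_ne_zero (det_of_pow_mul_ne_zero_of_isPrimitiveRoot hζ hinj hlt_q)
    (det_of_pow_mul_ne_zero_of_isPrimitiveRoot hζ.inv hinj hlt_q)

/-- with θ = 2π/q (q odd, q ≥ n) and distinct i_0,...,i_{k-1} in
{0,...,n−1}, the 2k×2k block matrix whose (a,b)-th 2×2 block is R_θ^{i_b·a}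
is nonsingular. -/
theorem stmt12 (q n k : ℕ) (hq : Odd q) (hq0 : 0 < q) (hn : n ≤ q)
    (idx : Fin k → ℕ) (hinj : Function.Injective idx) (hlt : ∀ b, idx b < n)
    (G : Matrix (Fin k × Fin 2) (Fin k × Fin 2) ℝ)
    (hG : ∀ (a b : Fin k) (r c : Fin 2), G (a, r) (b, c) =
      ((!![Real.cos (2 * Real.pi / q), -Real.sin (2 * Real.pi / q);
           Real.sin (2 * Real.pi / q),  Real.cos (2 * Real.pi / q)]) ^
        (idx b * (a : ℕ))) r c) :
    G.det ≠ 0 :=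
  stmt12_general q n k hq0 hn idx hinj hlt G hG
end
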